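/- Let G = (V,E) be a finite connected simple graph and let B = { v ∈ V : G \ {v} is connected } be the set of non-cut vertices. Then for any cut vertex k ∈ V − B, every connected component of G \ {k} contains at least one vertex of B. -/

import Mathlib

/-- The graph `G*(S)` on vertex subset `S`: distinct `u, v ∈ S` are adjacent iff
there is a path (walk) between `u` and `v` in `G` all of whose intermediate
vertices lie outside `S`. Vertices outside `S` are isolated. -/
def GStar {V : Type} (G : SimpleGraph V) (S : Set V) : SimpleGraph V where
  Adj u v := u ≠ v ∧ u ∈ S ∧ v ∈ S ∧
    ∃ p : G.Walk u v, ∀ x ∈ p.support, x ≠ u → x ≠ v → x ∉ S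
  symm := ⟨by
    rintro u v ⟨hne, hu, hv, p, hp⟩
    refine ⟨hne.symm, hv, hu, p.reverse, ?_⟩
    intro x hx hxv hxu
    exact hp x (by simpa [SimpleGraph.Walk.support_reverse] using hx) hxu hxv⟩
  loopless := ⟨fun u h => h.1 rfl⟩

/-- `a` and `b` are joined by a walk in `G` whose vertices all lie in `A`
(i.e. they are in the same component of the induced subgraph on `A`). -/
def ReachIn {V : Type} (G : SimpleGraph V) (A : Set V) (a b : V) : Prop :=
  ∃ p : G.Walk a b, ∀ x ∈ p.support, x ∈ A

/-!
Fix `a ≠ k` and choose `b` in the component of `a` in `G \ {k}` as far from `k` as possible.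
A shortest walk from `k` to any `x ≠ b` avoids `b`: otherwise its part after `b` joins `b` to `x`
without meeting `k`, so `x` lies in the same component, and it is strictly farther from `k` than `b`.
Hence all of `G \ {b}` is joined to `k` inside `G \ {b}`, i.e. `b` is not a cut vertex.
-/

open SimpleGraph

namespace ReachIn

variable {V : Type} {G : SimpleGraph V} {s : Set V} {a b c : V}

lemma refl (ha : a ∈ s) : ReachIn G s a a :=
  ⟨.nil, by simpa using ha⟩

lemma trans (hab : ReachIn G s a b) (hbc : ReachIn G s b c) : ReachIn G s a c := by
  obtain ⟨p, hp⟩ := hab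
  obtain ⟨q, hq⟩ := hbc
  refine ⟨p.append q, fun x hx => ?_⟩
  rcases (Walk.mem_support_append_iff p q).mp hx with hx | hx
  exacts [hp x hx, hq x hx]

lemma mem_right (h : ReachIn G s a b) : b ∈ s :=
  h.elim fun p hp => hp b p.end_mem_support

lemma reachable_induce (h : ReachIn G s a b) (ha : a ∈ s) (hb : b ∈ s) :
    (G.induce s).Reachable ⟨a, ha⟩ ⟨b, hb⟩ :=
  h.elim fun p hp => ⟨p.induce s hp⟩

end ReachIn

lemma SimpleGraph.connected_induce_of_forall_reachIn {V : Type} {G : SimpleGraph V} {s : Set V}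
    {c : V} (hc : c ∈ s) (h : ∀ x ∈ s, ReachIn G s c x) : (G.induce s).Connected := by
  have : Nonempty s := ⟨⟨c, hc⟩⟩
  refine Connected.mk fun ⟨x, hx⟩ ⟨y, hy⟩ => ?_
  exact ((h x hx).reachable_induce hc hx).symm.trans ((h y hy).reachable_induce hc hy)

namespace SimpleGraph.Walk

variable {V : Type} [DecidableEq V] {G : SimpleGraph V} {u v w : V}

lemma dist_lt_of_length_eq_dist (p : G.Walk u v) (hp : p.length = G.dist u v)
    (hw : w ∈ p.support) (hwv : w ≠ v) : G.dist u w < G.dist u v :=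
  calc G.dist u w ≤ (p.takeUntil w hw).length := dist_le _
    _ < p.length := length_takeUntil_lt_length hw hwv
    _ = G.dist u v := hp

lemma start_notMem_support_dropUntil_of_length_eq_dist (p : G.Walk u v)
    (hp : p.length = G.dist u v) (hw : w ∈ p.support) (hwu : w ≠ u) :
    u ∉ (p.dropUntil w hw).support := by
  intro hu
  set q := p.dropUntil w hw
  have hshorter : (q.dropUntil u hu).length < p.length :=
    (length_dropUntil_lt_length hu hwu.symm).trans_le (length_dropUntil_le_length p hw)
  have := dist_le (q.dropUntil u hu)
  omega

end SimpleGraph.Walk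

lemma SimpleGraph.Connected.connected_induce_compl_singleton_of_dist_le {V : Type}
    {G : SimpleGraph V} (hG : G.Connected) {k a b : V} (hab : ReachIn G {k}ᶜ a b)
    (hmax : ∀ x, ReachIn G {k}ᶜ a x → G.dist k x ≤ G.dist k b) :
    (G.induce {b}ᶜ).Connected := by
  classical
  have hbk : b ≠ k := hab.mem_right
  refine connected_induce_of_forall_reachIn (c := k) hbk.symm fun x hxb => ?_
  obtain ⟨p, hp⟩ := hG.exists_walk_length_eq_dist k x
  refine ⟨p, fun y hy (hyb : y = b) => ?_⟩
  subst y
  have hbx : ReachIn G {k}ᶜ b x :=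
    ⟨p.dropUntil b hy, fun z hz (hzk : z = k) => by
      subst z
      exact p.start_notMem_support_dropUntil_of_length_eq_dist hp hy hbk hz⟩
  have := hmax x (hab.trans hbx)
  have := p.dist_lt_of_length_eq_dist hp hy (Ne.symm hxb)
  omega

theorem stmt_10_general {V : Type} [Fintype V] (G : SimpleGraph V) (hG : G.Connected)
    (k : V) :
    ∀ a : V, a ≠ k →
      ∃ b : V, b ≠ k ∧ (G.induce ({b}ᶜ : Set V)).Connected ∧
        ReachIn G ({k}ᶜ : Set V) a b := by
  intro a ha
  obtain ⟨b, hab, hmax⟩ := Set.exists_max_image {x | ReachIn G {k}ᶜ a x} (G.dist k)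
    (Set.toFinite _) ⟨a, ReachIn.refl ha⟩
  exact ⟨b, hab.mem_right, hG.connected_induce_compl_singleton_of_dist_le hab hmax, hab⟩

/-- Let `G` be a finite connected simple graph and let `B` be the
set of non-cut vertices (those `v` with `G \ {v}` connected). Then for any cut
vertex `k`, every connected component of `G \ {k}` contains a vertex of `B`:
every vertex `a ≠ k` is joined, within `G \ {k}`, to some non-cut vertex `b`. -/
theorem stmt_10 {V : Type} [Fintype V] (G : SimpleGraph V) (hG : G.Connected)
    (k : V) (hk : ¬ (G.induce ({k}ᶜ : Set V)).Connected) :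
    ∀ a : V, a ≠ k →
      ∃ b : V, b ≠ k ∧ (G.induce ({b}ᶜ : Set V)).Connected ∧
        ReachIn G ({k}ᶜ : Set V) a b :=
  stmt_10_general G hG k
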